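/- arXiv:1908.06957 — 2 statements merged into one kernel-verified Lean document; each statement's English description precedes it below -/
import Mathlib

section
/- Let N be a positive integer and X an integer with 0 ≤ X ≤ N. Let Δ₁, …, Δ_N, P be random variables such that H(P | Δ₁, …, Δ_N) = 0, and such that for every subset 𝒳 ⊆ {1, …, N} with |𝒳| = X one has I(P ; (Δ_n)_{n∈𝒳}) = 0. Then H(P) ≤ (1 − X/N) · Σ_{n=1}^{N} H(Δ_n). -/
open scoped BigOperators Classical

noncomputable section

namespace SDMM

variable {Ω : Type} [Fintype Ω]

/-- The probability that the random variable `X` (on finite sample space `Ω`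
with probability mass function `p`) takes the value `a`. -/
def distOf (p : Ω → ℝ) {α : Type*} (X : Ω → α) (a : α) : ℝ :=
  ∑ ω, if X ω = a then p ω else 0

/-- `p` is a probability mass function on `Ω`. -/
def IsPMF (p : Ω → ℝ) : Prop := (∀ ω, 0 ≤ p ω) ∧ ∑ ω, p ω = 1

/-- Shannon entropy (natural-log units) of the random variable `X`. -/
def H (p : Ω → ℝ) {α : Type*} [Fintype α] (X : Ω → α) : ℝ :=
  ∑ a, Real.negMulLog (distOf p X a)

/-- Conditional Shannon entropy `H(X | Y) = H(X, Y) - H(Y)`. -/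
def Hc (p : Ω → ℝ) {α β : Type*} [Fintype α] [Fintype β] (X : Ω → α) (Y : Ω → β) : ℝ :=
  H p (fun ω => (X ω, Y ω)) - H p Y

/-- Mutual information `I(X ; Y) = H(X) + H(Y) - H(X, Y)`. -/
def MI (p : Ω → ℝ) {α β : Type*} [Fintype α] [Fintype β] (X : Ω → α) (Y : Ω → β) : ℝ :=
  H p X + H p Y - H p (fun ω => (X ω, Y ω))

/-- Conditional mutual information `I(X ; Y | Z)`. -/
def CMI (p : Ω → ℝ) {α β γ : Type*} [Fintype α] [Fintype β] [Fintype γ]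
    (X : Ω → α) (Y : Ω → β) (Z : Ω → γ) : ℝ :=
  H p (fun ω => (X ω, Z ω)) + H p (fun ω => (Y ω, Z ω))
    - H p (fun ω => (X ω, Y ω, Z ω)) - H p Z

/-- `X` is uniformly distributed on `α`. -/
def Uniform (p : Ω → ℝ) {α : Type*} [Fintype α] (X : Ω → α) : Prop :=
  ∀ a, distOf p X a = 1 / Fintype.card α

/-- `X` and `Y` are independent random variables. -/
def IndepRV (p : Ω → ℝ) {α β : Type*} (X : Ω → α) (Y : Ω → β) : Prop :=
  ∀ a b, distOf p (fun ω => (X ω, Y ω)) (a, b) = distOf p X a * distOf p Y b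

end SDMM

namespace SDMMAux

open SDMM Real

variable {Ω : Type} [Fintype Ω] {p : Ω → ℝ}

lemma distOf_nonneg (hp : ∀ ω, 0 ≤ p ω) {α : Type*} (X : Ω → α) (a : α) :
    0 ≤ distOf p X a :=
  Finset.sum_nonneg fun ω _ => by split <;> simp [hp ω]

lemma sum_distOf {α : Type*} [Fintype α] (hp : IsPMF p) (X : Ω → α) :
    ∑ a, distOf p X a = 1 := by
  unfold distOf
  rw [Finset.sum_comm]
  simp only [Finset.sum_ite_eq, Finset.mem_univ, if_true]
  exact hp.2

lemma distOf_fst {α β : Type*} [Fintype β] (X : Ω → α) (Y : Ω → β) (a : α) :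
    distOf p X a = ∑ b, distOf p (fun ω => (X ω, Y ω)) (a, b) := by
  unfold distOf
  rw [Finset.sum_comm]
  refine Finset.sum_congr rfl fun ω _ => ?_
  by_cases h : X ω = a
  · simp [h, Prod.ext_iff, Finset.sum_ite_eq]
  · simp [h, Prod.ext_iff]

lemma distOf_snd {α β : Type*} [Fintype α] (X : Ω → α) (Y : Ω → β) (b : β) :
    distOf p Y b = ∑ a, distOf p (fun ω => (X ω, Y ω)) (a, b) := by
  unfold distOf
  rw [Finset.sum_comm]
  refine Finset.sum_congr rfl fun ω _ => ?_
  by_cases h : Y ω = b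
  · simp [h, Prod.ext_iff, Finset.sum_ite_eq]
  · simp [h, Prod.ext_iff]

lemma distOf_comp {α β : Type*} (e : α → β) (he : Function.Injective e)
    (X : Ω → α) (a : α) :
    distOf p (fun ω => e (X ω)) (e a) = distOf p X a := by
  unfold distOf
  exact Finset.sum_congr rfl fun ω _ => by simp [he.eq_iff]

lemma distOf_comp_not_mem {α β : Type*} (e : α → β) (X : Ω → α) {b : β}
    (hb : ∀ a, e a ≠ b) : distOf p (fun ω => e (X ω)) b = 0 := by
  unfold distOf
  exact Finset.sum_eq_zero fun ω _ => by simp [hb (X ω)]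

lemma H_comp {α β : Type*} [Fintype α] [Fintype β] (e : α → β)
    (he : Function.Injective e) (X : Ω → α) :
    H p (fun ω => e (X ω)) = H p X := by
  unfold H
  have h1 : ∑ b, Real.negMulLog (distOf p (fun ω => e (X ω)) b)
      = ∑ b ∈ Finset.univ.image e, Real.negMulLog (distOf p (fun ω => e (X ω)) b) := by
    refine (Finset.sum_subset (Finset.subset_univ _) fun b _ hb => ?_).symm
    rw [distOf_comp_not_mem e X fun a hea =>
      hb (Finset.mem_image.mpr ⟨a, Finset.mem_univ a, hea⟩)]
    simp
  rw [h1, Finset.sum_image (fun x _ y _ h => he h)]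
  exact Finset.sum_congr rfl fun a _ => by rw [distOf_comp e he]

lemma negMulLog_add_le {x y : ℝ} (hx : 0 ≤ x) (hy : 0 ≤ y) :
    Real.negMulLog (x + y) ≤ Real.negMulLog x + Real.negMulLog y := by
  rcases eq_or_lt_of_le hx with rfl | hx'
  · simp
  rcases eq_or_lt_of_le hy with rfl | hy'
  · simp
  have h1 : Real.log x ≤ Real.log (x + y) := Real.log_le_log hx' (by linarith)
  have h2 : Real.log y ≤ Real.log (x + y) := Real.log_le_log hy' (by linarith)
  simp only [Real.negMulLog, neg_mul]
  nlinarith [mul_le_mul_of_nonneg_left h1 hx'.le, mul_le_mul_of_nonneg_left h2 hy'.le]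

lemma negMulLog_sum_le {ι : Type*} (s : Finset ι) (f : ι → ℝ) (hf : ∀ i, 0 ≤ f i) :
    Real.negMulLog (∑ i ∈ s, f i) ≤ ∑ i ∈ s, Real.negMulLog (f i) := by
  induction s using Finset.cons_induction with
  | empty => simp
  | cons a t ha ih =>
    rw [Finset.sum_cons, Finset.sum_cons]
    calc Real.negMulLog (f a + ∑ i ∈ t, f i)
        ≤ Real.negMulLog (f a) + Real.negMulLog (∑ i ∈ t, f i) :=
          negMulLog_add_le (hf a) (Finset.sum_nonneg fun i _ => hf i)
      _ ≤ _ := add_le_add_right ih _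

lemma H_le_H_pair {α β : Type*} [Fintype α] [Fintype β] (hp : ∀ ω, 0 ≤ p ω)
    (X : Ω → α) (Y : Ω → β) :
    H p X ≤ H p (fun ω => (X ω, Y ω)) := by
  unfold H
  rw [Fintype.sum_prod_type]
  refine Finset.sum_le_sum fun a _ => ?_
  rw [distOf_fst X Y a]
  exact negMulLog_sum_le _ _ fun b => distOf_nonneg hp _ _

lemma H_pair_le {α β : Type*} [Fintype α] [Fintype β] (hp : IsPMF p)
    (X : Ω → α) (Y : Ω → β) :
    H p (fun ω => (X ω, Y ω)) ≤ H p X + H p Y := by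
  classical
  set q : α × β → ℝ := distOf p (fun ω => (X ω, Y ω)) with hq
  have hq0 : ∀ ab, 0 ≤ q ab := fun ab => distOf_nonneg hp.1 _ _
  have hR : ∀ a, distOf p X a = ∑ b, q (a, b) := fun a => distOf_fst X Y a
  have hS : ∀ b, distOf p Y b = ∑ a, q (a, b) := fun b => distOf_snd X Y b
  have hqsum : ∑ a, ∑ b, q (a, b) = 1 := by
    rw [← Fintype.sum_prod_type]; exact sum_distOf hp _
  -- key pointwise inequality
  have key : ∀ a b, q (a, b) - (∑ b', q (a, b')) * (∑ a', q (a', b))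
      ≤ (-(q (a, b) * Real.log (∑ b', q (a, b'))))
        + (-(q (a, b) * Real.log (∑ a', q (a', b))))
        - Real.negMulLog (q (a, b)) := by
    intro a b
    set R : ℝ := ∑ b', q (a, b') with hRd
    set S : ℝ := ∑ a', q (a', b) with hSd
    have hR0 : 0 ≤ R := Finset.sum_nonneg fun _ _ => hq0 _
    have hS0 : 0 ≤ S := Finset.sum_nonneg fun _ _ => hq0 _
    rcases eq_or_lt_of_le (hq0 (a, b)) with h0 | h0
    · rw [← h0]
      simp only [Real.negMulLog_zero, zero_mul, neg_zero, add_zero, sub_zero, zero_sub]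
      nlinarith
    · have hqR : q (a, b) ≤ R := Finset.single_le_sum (fun b' _ => hq0 (a, b')) (Finset.mem_univ b)
      have hqS : q (a, b) ≤ S := Finset.single_le_sum (fun a' _ => hq0 (a', b)) (Finset.mem_univ a)
      have hRpos : 0 < R := lt_of_lt_of_le h0 hqR
      have hSpos : 0 < S := lt_of_lt_of_le h0 hqS
      have hlog : Real.log (R * S / q (a, b)) ≤ R * S / q (a, b) - 1 :=
        Real.log_le_sub_one_of_pos (by positivity)
      rw [Real.log_div (by positivity) (ne_of_gt h0),
        Real.log_mul (ne_of_gt hRpos) (ne_of_gt hSpos)] at hlog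
      have hmul := mul_le_mul_of_nonneg_left hlog h0.le
      have hfs : q (a, b) * (R * S / q (a, b) - 1) = R * S - q (a, b) := by
        field_simp
      rw [hfs] at hmul
      simp only [Real.negMulLog, neg_mul]
      nlinarith
  -- sum the pointwise inequality
  have main := Finset.sum_le_sum fun a (_ : a ∈ Finset.univ) =>
    Finset.sum_le_sum fun b (_ : b ∈ Finset.univ) => key a b
  -- compute the left side of `main`
  have hleft : ∑ a, ∑ b, (q (a, b) - (∑ b', q (a, b')) * (∑ a', q (a', b))) = 0 := by
    rw [Finset.sum_congr rfl fun a _ => Finset.sum_sub_distrib _ _, Finset.sum_sub_distrib, hqsum]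
    have : ∑ a, ∑ b, (∑ b', q (a, b')) * (∑ a', q (a', b))
        = (∑ a, ∑ b', q (a, b')) * (∑ b, ∑ a', q (a', b)) := by
      rw [Finset.sum_mul_sum]
    rw [this, hqsum, Finset.sum_comm, hqsum]
    norm_num
  rw [hleft] at main
  -- identify the right side of `main` with the entropies
  have hHX : H p X = ∑ a, ∑ b, -(q (a, b) * Real.log (∑ b', q (a, b'))) := by
    unfold H
    refine Finset.sum_congr rfl fun a _ => ?_
    rw [hR a, Real.negMulLog, neg_mul, Finset.sum_mul, ← Finset.sum_neg_distrib]
  have hHY : H p Y = ∑ a, ∑ b, -(q (a, b) * Real.log (∑ a', q (a', b))) := by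
    have hb : ∀ b, Real.negMulLog (distOf p Y b)
        = ∑ a, -(q (a, b) * Real.log (∑ a', q (a', b))) := by
      intro b
      rw [hS b, Real.negMulLog, neg_mul, Finset.sum_mul, ← Finset.sum_neg_distrib]
    unfold H
    rw [Finset.sum_congr rfl fun b _ => hb b, Finset.sum_comm]
  have hHpair : H p (fun ω => (X ω, Y ω)) = ∑ a, ∑ b, Real.negMulLog (q (a, b)) := by
    unfold H
    rw [Fintype.sum_prod_type]
  have hsplit : ∑ a, ∑ b, ((-(q (a, b) * Real.log (∑ b', q (a, b'))))
        + (-(q (a, b) * Real.log (∑ a', q (a', b)))) - Real.negMulLog (q (a, b)))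
      = (∑ a, ∑ b, -(q (a, b) * Real.log (∑ b', q (a, b'))))
        + (∑ a, ∑ b, -(q (a, b) * Real.log (∑ a', q (a', b))))
        - (∑ a, ∑ b, Real.negMulLog (q (a, b))) := by
    simp only [Finset.sum_sub_distrib, Finset.sum_add_distrib]
  rw [hsplit] at main
  linarith [main, hHX, hHY, hHpair]

lemma H_subsingleton {γ : Type*} [Fintype γ] [Subsingleton γ] (hp : IsPMF p)
    (Z : Ω → γ) : H p Z = 0 := by
  unfold H
  refine Finset.sum_eq_zero fun a _ => ?_
  have : distOf p Z a = 1 := by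
    unfold distOf
    rw [Finset.sum_congr rfl fun ω _ => by rw [if_pos (Subsingleton.elim _ _)]]
    exact hp.2
  rw [this, Real.negMulLog_one]

set_option maxHeartbeats 1000000 in
lemma H_tuple_le_sum {N : ℕ} {D : Fin N → Type} [∀ n, Fintype (D n)]
    (hp : IsPMF p) (Δ : ∀ n, Ω → D n) (s : Finset (Fin N)) :
    H p (fun ω => (fun i : s => Δ i.1 ω)) ≤ ∑ i ∈ s, H p (Δ i) := by
  classical
  induction s using Finset.cons_induction with
  | empty =>
    rw [H_subsingleton hp]
    simp
  | cons a t ha ih =>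
    let e : (∀ i : (Finset.cons a t ha : Finset (Fin N)), D i.1)
        → D a × (∀ i : t, D i.1) :=
      fun f => (f ⟨a, Finset.mem_cons_self a t⟩,
        fun i => f ⟨i.1, Finset.mem_cons_of_mem i.2⟩)
    have he : Function.Injective e := by
      intro f g h
      funext ⟨i, hi⟩
      rcases Finset.mem_cons.mp hi with h1 | h1
      · subst h1
        exact congrArg Prod.fst h
      · exact congrFun (congrArg Prod.snd h) ⟨i, h1⟩
    have hcomp := H_comp (p := p) e he
      (fun ω => (fun i : (Finset.cons a t ha : Finset (Fin N)) => Δ i.1 ω))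
    have h2 : H p (fun ω => (fun i : (Finset.cons a t ha : Finset (Fin N)) => Δ i.1 ω))
        = H p (fun ω => (Δ a ω, fun i : t => Δ i.1 ω)) := hcomp.symm
    calc H p (fun ω => (fun i : (Finset.cons a t ha : Finset (Fin N)) => Δ i.1 ω))
        = H p (fun ω => (Δ a ω, fun i : t => Δ i.1 ω)) := h2
      _ ≤ H p (Δ a) + H p (fun ω => (fun i : t => Δ i.1 ω)) := H_pair_le hp _ _
      _ ≤ H p (Δ a) + ∑ i ∈ t, H p (Δ i) := add_le_add_right ih _
      _ = ∑ i ∈ Finset.cons a t ha, H p (Δ i) := by rw [Finset.sum_cons]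

end SDMMAux

/-- **Converse bound for fully secure SDMM₍AB,φ₎ (Section 4.2).**
If the desired products `P` are decodable from all downloads `Δ₁, …, Δ_N`, and
`P` is independent of the downloads of any `X` servers, then
`H(P) ≤ (1 - X/N) · Σₙ H(Δₙ)`. -/
theorem sdmm_converse_fully_secure
    (N X : ℕ) (hN : 0 < N) (hX : X ≤ N)
    (Ω : Type) [Fintype Ω] (p : Ω → ℝ) (hp : SDMM.IsPMF p)
    (D : Fin N → Type) [∀ n, Fintype (D n)]
    {αP : Type} [Fintype αP]
    (Δ : ∀ n, Ω → D n) (P : Ω → αP)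
    (hdec : SDMM.Hc p P (fun ω => (fun n => Δ n ω)) = 0)
    (hsec : ∀ 𝒳 : Finset (Fin N), 𝒳.card = X →
      SDMM.MI p P (fun ω => (fun n : 𝒳 => Δ n.1 ω)) = 0) :
    SDMM.H p P ≤ (1 - (X : ℝ) / N) * ∑ n, SDMM.H p (Δ n) := by
  classical
  have hp0 := hp.1
  simp only [SDMM.Hc] at hdec
  -- Step 1: the per-subset bound
  have key : ∀ 𝒳 : Finset (Fin N), 𝒳.card = X →
      SDMM.H p P ≤ ∑ n ∈ 𝒳ᶜ, SDMM.H p (Δ n) := by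
    intro 𝒳 h𝒳
    have hMI := hsec 𝒳 h𝒳
    simp only [SDMM.MI] at hMI
    -- the gluing bijection between pairs of tuples and full tuples
    let glue : (∀ n : (𝒳ᶜ : Finset (Fin N)), D n.1) × (∀ n : 𝒳, D n.1) → (∀ n, D n) :=
      fun cs n => if h : n ∈ 𝒳 then cs.2 ⟨n, h⟩ else cs.1 ⟨n, Finset.mem_compl.mpr h⟩
    have glue_inj : Function.Injective glue := by
      rintro ⟨c, s⟩ ⟨c', s'⟩ hcs
      have h' : ∀ n, glue (c, s) n = glue (c', s') n := fun n => congrFun hcs n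
      refine Prod.ext ?_ ?_
      · funext ⟨n, hn⟩
        have hn' : n ∉ 𝒳 := Finset.mem_compl.mp hn
        have h2 := h' n
        simpa only [glue, dif_neg hn'] using h2
      · funext ⟨n, hn⟩
        have h2 := h' n
        simpa only [glue, dif_pos hn] using h2
    let e1 : (αP × (∀ n : 𝒳, D n.1)) × (∀ n : (𝒳ᶜ : Finset (Fin N)), D n.1)
        → αP × (∀ n, D n) :=
      fun x => (x.1.1, glue (x.2, x.1.2))
    have e1_inj : Function.Injective e1 := by
      rintro ⟨⟨u, s⟩, c⟩ ⟨⟨u', s'⟩, c'⟩ h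
      have h1 : u = u' := congrArg Prod.fst h
      have h2 := glue_inj (congrArg Prod.snd h)
      have hc : c = c' := congrArg Prod.fst h2
      have hs : s = s' := congrArg Prod.snd h2
      subst h1; subst hc; subst hs; rfl
    -- chain of (in)equalities
    have hA := SDMMAux.H_le_H_pair hp0
      (fun ω => (P ω, fun n : 𝒳 => Δ n.1 ω))
      (fun ω => (fun n : (𝒳ᶜ : Finset (Fin N)) => Δ n.1 ω))
    have hB1 := SDMMAux.H_comp (p := p) e1 e1_inj
      (fun ω => ((P ω, fun n : 𝒳 => Δ n.1 ω), fun n : (𝒳ᶜ : Finset (Fin N)) => Δ n.1 ω))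
    have hglueT : (fun ω => e1 ((P ω, fun n : 𝒳 => Δ n.1 ω),
          fun n : (𝒳ᶜ : Finset (Fin N)) => Δ n.1 ω))
        = fun ω => (P ω, fun n => Δ n ω) := by
      funext ω
      refine Prod.ext rfl ?_
      funext n
      by_cases h : n ∈ 𝒳 <;> simp [e1, glue, h]
    have hB : SDMM.H p (fun ω => ((P ω, fun n : 𝒳 => Δ n.1 ω),
          fun n : (𝒳ᶜ : Finset (Fin N)) => Δ n.1 ω))
        = SDMM.H p (fun ω => (P ω, fun n => Δ n ω)) :=
      hB1.symm.trans (congrArg (SDMM.H p) hglueT)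
    have hE1 := SDMMAux.H_comp (p := p) glue glue_inj
      (fun ω => ((fun n : (𝒳ᶜ : Finset (Fin N)) => Δ n.1 ω), fun n : 𝒳 => Δ n.1 ω))
    have hglueT2 : (fun ω => glue ((fun n : (𝒳ᶜ : Finset (Fin N)) => Δ n.1 ω),
          fun n : 𝒳 => Δ n.1 ω))
        = fun ω => (fun n => Δ n ω) := by
      funext ω
      funext n
      by_cases h : n ∈ 𝒳 <;> simp [glue, h]
    have hE : SDMM.H p (fun ω => (fun n => Δ n ω))
        = SDMM.H p (fun ω => ((fun n : (𝒳ᶜ : Finset (Fin N)) => Δ n.1 ω),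
            fun n : 𝒳 => Δ n.1 ω)) :=
      (congrArg (SDMM.H p) hglueT2).symm.trans hE1
    have hF := SDMMAux.H_pair_le hp
      (fun ω => (fun n : (𝒳ᶜ : Finset (Fin N)) => Δ n.1 ω))
      (fun ω => (fun n : 𝒳 => Δ n.1 ω))
    have hG := SDMMAux.H_tuple_le_sum hp Δ 𝒳ᶜ
    linarith [hA, hB, hE, hF, hG, hMI, hdec]
  -- Step 2: average over all subsets of size X
  have hc1pos : (0 : ℝ) < (Nat.choose N X : ℝ) :=
    Nat.cast_pos.mpr (Nat.choose_pos hX)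
  have hsum := Finset.sum_le_sum
    (s := Finset.powersetCard X (Finset.univ : Finset (Fin N)))
    (f := fun _ : Finset (Fin N) => SDMM.H p P)
    (g := fun 𝒳 => ∑ n ∈ 𝒳ᶜ, SDMM.H p (Δ n))
    (fun 𝒳 h𝒳 => key 𝒳 (Finset.mem_powersetCard.mp h𝒳).2)
  rw [Finset.sum_const, Finset.card_powersetCard, Finset.card_univ, Fintype.card_fin,
    nsmul_eq_mul] at hsum
  have hRHS : ∑ 𝒳 ∈ Finset.powersetCard X (Finset.univ : Finset (Fin N)),
        ∑ n ∈ 𝒳ᶜ, SDMM.H p (Δ n)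
      = (Nat.choose (N - 1) X : ℝ) * ∑ n, SDMM.H p (Δ n) := by
    have h1 : ∀ 𝒳 : Finset (Fin N), ∑ n ∈ 𝒳ᶜ, SDMM.H p (Δ n)
        = ∑ n : Fin N, if n ∉ 𝒳 then SDMM.H p (Δ n) else 0 := by
      intro 𝒳
      rw [← Finset.sum_filter]
      congr 1
      ext n
      simp [Finset.mem_compl]
    rw [Finset.sum_congr rfl fun 𝒳 _ => h1 𝒳, Finset.sum_comm, Finset.mul_sum]
    refine Finset.sum_congr rfl fun n _ => ?_
    rw [← Finset.sum_filter, Finset.sum_const]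
    have hfil : (Finset.powersetCard X (Finset.univ : Finset (Fin N))).filter
          (fun 𝒳 => n ∉ 𝒳)
        = Finset.powersetCard X (Finset.univ.erase n) := by
      ext 𝒳
      simp only [Finset.mem_filter, Finset.mem_powersetCard, Finset.subset_erase,
        Finset.subset_univ, true_and]
      tauto
    rw [hfil, Finset.card_powersetCard, Finset.card_erase_of_mem (Finset.mem_univ n),
      Finset.card_univ, Fintype.card_fin, nsmul_eq_mul]
  rw [hRHS] at hsum
  -- Step 3: the combinatorial identity and conclusion
  have hid : N * Nat.choose (N - 1) X = Nat.choose N X * (N - X) := by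
    have h1 := Nat.add_one_mul_choose_eq (N - 1) X
    have h2 : N - 1 + 1 = N := by omega
    rw [h2] at h1
    rw [h1, Nat.choose_succ_right_eq]
  have hidR : (N : ℝ) * (Nat.choose (N - 1) X : ℝ)
      = (Nat.choose N X : ℝ) * ((N : ℝ) - (X : ℝ)) := by
    have h2 := congrArg (Nat.cast : ℕ → ℝ) hid
    push_cast [Nat.cast_sub hX] at h2
    linarith [h2]
  have hNpos : (0 : ℝ) < (N : ℝ) := Nat.cast_pos.mpr hN
  have hscal : (1 : ℝ) - (X : ℝ) / N
      = (Nat.choose (N - 1) X : ℝ) / (Nat.choose N X : ℝ) := by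
    rw [eq_div_iff (ne_of_gt hc1pos)]
    field_simp
    nlinarith [hidR]
  rw [hscal, div_mul_eq_mul_div, le_div_iff₀ hc1pos]
  nlinarith [hsum]
end
end

section
/- Let S, S′, Q, Q′, A, W be random variables such that: (i) H(S′ | S) = 0; (ii) H(Q′ | Q) = 0; (iii) H(A | Q′, S) = 0; (iv) H(W | S) = 0; and (v) I(S ; Q) = 0. Then H(A | S′, Q, W) = H(A | S′, Q′, W). -/
open scoped BigOperators Classical

noncomputable section

namespace SDMM

variable {Ω : Type} [Fintype Ω] {p : Ω → ℝ}

lemma distOf_nonneg (hp : ∀ ω, 0 ≤ p ω) {α : Type*} (X : Ω → α) (a : α) :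
    0 ≤ distOf p X a := by
  apply Finset.sum_nonneg; intro ω _; split <;> simp [hp ω]

lemma sum_distOf {α : Type*} [Fintype α] (X : Ω → α) :
    ∑ a, distOf p X a = ∑ ω, p ω := by
  unfold distOf
  rw [Finset.sum_comm]
  exact Finset.sum_congr rfl fun ω _ => by simp [Finset.sum_ite_eq']

lemma distOf_congr {α : Type*} {X X' : Ω → α} (h : ∀ ω, p ω ≠ 0 → X ω = X' ω) :
    distOf p X = distOf p X' := by
  funext a
  refine Finset.sum_congr rfl fun ω _ => ?_
  by_cases hω : p ω = 0
  · simp [hω]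
  · rw [h ω hω]

lemma H_congr {α : Type*} [Fintype α] {X X' : Ω → α} (h : ∀ ω, p ω ≠ 0 → X ω = X' ω) :
    H p X = H p X' := by
  unfold H; rw [distOf_congr h]

lemma le_distOf (hp : ∀ ω, 0 ≤ p ω) {α : Type*} (X : Ω → α) (ω : Ω) :
    p ω ≤ distOf p X (X ω) := by
  classical
  have := Finset.single_le_sum (f := fun ω' => if X ω' = X ω then p ω' else 0)
    (fun i _ => by split <;> simp [hp i]) (Finset.mem_univ ω)
  simpa [distOf] using this

lemma distOf_comp {α β : Type*} [Fintype α] (X : Ω → α) (e : α → β) (c : β) :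
    distOf p (fun ω => e (X ω)) c = ∑ a, if e a = c then distOf p X a else 0 := by
  unfold distOf
  have h1 : ∀ a : α, (if e a = c then ∑ ω, if X ω = a then p ω else 0 else 0)
      = ∑ ω, if e a = c then (if X ω = a then p ω else 0) else 0 := by
    intro a; split <;> simp
  rw [Finset.sum_congr rfl fun a _ => h1 a, Finset.sum_comm]
  refine Finset.sum_congr rfl fun ω _ => ?_
  have h2 : ∀ a, (if e a = c then if X ω = a then p ω else 0 else 0)
      = if a = X ω then (if e (X ω) = c then p ω else 0) else 0 := by
    intro a
    rcases eq_or_ne a (X ω) with rfl | hne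
    · simp
    · simp [hne, Ne.symm hne]
  simp only [h2, Finset.sum_ite_eq', Finset.mem_univ, if_true]

lemma H_comp_injective {α β : Type*} [Fintype α] [Fintype β] (X : Ω → α) {e : α → β}
    (he : Function.Injective e) : H p (fun ω => e (X ω)) = H p X := by
  classical
  unfold H
  have key : ∀ a : α, distOf p (fun ω => e (X ω)) (e a) = distOf p X a := by
    intro a
    refine Finset.sum_congr rfl fun ω _ => ?_
    simp [he.eq_iff]
  have h0 : ∀ c : β, c ∉ Finset.univ.image e → distOf p (fun ω => e (X ω)) c = 0 := by
    intro c hc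
    apply Finset.sum_eq_zero; intro ω _
    have : e (X ω) ≠ c := fun h => hc (by simp [← h])
    simp [this]
  rw [← Finset.sum_subset (Finset.subset_univ (Finset.univ.image e))
      (fun c _ hc => by rw [h0 c hc, Real.negMulLog_zero]),
    Finset.sum_image (fun a _ b _ h => he h)]
  exact Finset.sum_congr rfl fun a _ => by rw [key]

lemma distOf_pair_sum_left {α β : Type*} [Fintype α] (X : Ω → α) (Y : Ω → β) (b : β) :
    ∑ a, distOf p (fun ω => (X ω, Y ω)) (a, b) = distOf p Y b := by
  unfold distOf
  rw [Finset.sum_comm]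
  refine Finset.sum_congr rfl fun ω _ => ?_
  simp [Prod.mk.injEq, ite_and, Finset.sum_ite_eq]

lemma negMulLog_sum_eq {ι : Type*} [Fintype ι] (t : ι → ℝ) :
    Real.negMulLog (∑ i, t i) = ∑ i, -(t i * Real.log (∑ i, t i)) := by
  rw [Real.negMulLog, neg_mul, Finset.sum_mul, Finset.sum_neg_distrib]

lemma negMulLog_term_le {ι : Type*} [Fintype ι] (t : ι → ℝ) (h0 : ∀ i, 0 ≤ t i) (i : ι) :
    -(t i * Real.log (∑ i, t i)) ≤ Real.negMulLog (t i) := by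
  rw [Real.negMulLog, neg_mul, neg_le_neg_iff]
  rcases eq_or_lt_of_le (h0 i) with h | h
  · simp [← h]
  · exact mul_le_mul_of_nonneg_left
      (Real.log_le_log h
        (Finset.single_le_sum (fun i _ => h0 i) (Finset.mem_univ i))) (h0 i)

lemma negMulLog_sum_le {ι : Type*} [Fintype ι] (t : ι → ℝ) (h0 : ∀ i, 0 ≤ t i) :
    Real.negMulLog (∑ i, t i) ≤ ∑ i, Real.negMulLog (t i) := by
  rw [negMulLog_sum_eq]
  exact Finset.sum_le_sum fun i _ => negMulLog_term_le t h0 i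

lemma eq_of_negMulLog_sum_eq {ι : Type*} [Fintype ι] {t : ι → ℝ} (h0 : ∀ i, 0 ≤ t i)
    (heq : Real.negMulLog (∑ i, t i) = ∑ i, Real.negMulLog (t i)) :
    ∀ i j, t i ≠ 0 → t j ≠ 0 → i = j := by
  have hterm : ∀ i ∈ Finset.univ, -(t i * Real.log (∑ i, t i)) = Real.negMulLog (t i) := by
    rw [← Finset.sum_eq_sum_iff_of_le (fun i _ => negMulLog_term_le t h0 i)]
    rw [← negMulLog_sum_eq]; exact heq
  have hkey : ∀ i, t i ≠ 0 → t i = ∑ i, t i := by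
    intro i hi
    have hip : 0 < t i := lt_of_le_of_ne (h0 i) (Ne.symm hi)
    have h2 := hterm i (Finset.mem_univ i)
    rw [Real.negMulLog, neg_mul, neg_inj] at h2
    have hlog : Real.log (∑ i, t i) = Real.log (t i) := mul_left_cancel₀ hi h2
    by_contra hne
    have hlt : t i < ∑ i, t i :=
      lt_of_le_of_ne (Finset.single_le_sum (fun i _ => h0 i) (Finset.mem_univ i)) hne
    exact absurd hlog (ne_of_gt (Real.log_lt_log hip hlt))
  intro i j hi hj
  by_contra hne
  have hsum : t i + t j ≤ ∑ k, t k := by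
    rw [← Finset.sum_pair hne]
    exact Finset.sum_le_sum_of_subset_of_nonneg (Finset.subset_univ _)
      (fun k _ _ => h0 k)
  have hjp : 0 < t j := lt_of_le_of_ne (h0 j) (Ne.symm hj)
  linarith [hkey i hi]

lemma exists_fn_of_Hc_eq_zero {α β : Type*} [Fintype α] [Fintype β] [Nonempty α]
    (hp : IsPMF p) {X : Ω → α} {Y : Ω → β} (h : Hc p X Y = 0) :
    ∃ f : β → α, ∀ ω, p ω ≠ 0 → X ω = f (Y ω) := by
  classical
  set j := fun (b : β) (a : α) => distOf p (fun ω => (X ω, Y ω)) (a, b) with hjdef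
  have hnn : ∀ b a, 0 ≤ j b a := fun b a => distOf_nonneg hp.1 _ _
  have hmarg : ∀ b, ∑ a, j b a = distOf p Y b := fun b => distOf_pair_sum_left X Y b
  have hsplit : ∑ b, (∑ a, Real.negMulLog (j b a) - Real.negMulLog (∑ a, j b a)) = 0 := by
    unfold Hc H at h
    rw [Fintype.sum_prod_type, Finset.sum_comm] at h
    rw [Finset.sum_sub_distrib]
    rw [Finset.sum_congr rfl fun b _ => congrArg Real.negMulLog (hmarg b)]
    exact h
  have hterm0 : ∀ b, ∑ a, Real.negMulLog (j b a) - Real.negMulLog (∑ a, j b a) = 0 := by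
    have h3 := (Finset.sum_eq_zero_iff_of_nonneg (fun b _ => by
      have := negMulLog_sum_le (j b) (hnn b); linarith)).mp hsplit
    exact fun b => h3 b (Finset.mem_univ b)
  have huniq : ∀ b, ∀ a a', j b a ≠ 0 → j b a' ≠ 0 → a = a' := by
    intro b
    exact eq_of_negMulLog_sum_eq (hnn b) (by have := hterm0 b; linarith)
  refine ⟨fun b => if hb : ∃ a, j b a ≠ 0 then hb.choose else Classical.arbitrary α,
    fun ω hω => ?_⟩
  have hpos : j (Y ω) (X ω) ≠ 0 := by
    have h1 := le_distOf hp.1 (fun ω => (X ω, Y ω)) ω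
    have h2 : 0 < p ω := lt_of_le_of_ne (hp.1 ω) (Ne.symm hω)
    exact ne_of_gt (lt_of_lt_of_le h2 h1)
  have hb : ∃ a, j (Y ω) a ≠ 0 := ⟨X ω, hpos⟩
  show X ω = if hb' : ∃ a, j (Y ω) a ≠ 0 then hb'.choose else Classical.arbitrary α
  rw [dif_pos hb]
  exact huniq (Y ω) (X ω) hb.choose hpos hb.choose_spec

lemma distOf_pair_sum_right {α β : Type*} [Fintype β] (X : Ω → α) (Y : Ω → β) (a : α) :
    ∑ b, distOf p (fun ω => (X ω, Y ω)) (a, b) = distOf p X a := by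
  unfold distOf
  rw [Finset.sum_comm]
  refine Finset.sum_congr rfl fun ω _ => ?_
  by_cases hx : X ω = a <;> simp [hx, Prod.mk.injEq, ite_and, Finset.sum_ite_eq]

lemma indep_of_MI_eq_zero {α β : Type*} [Fintype α] [Fintype β]
    (hp : IsPMF p) {X : Ω → α} {Y : Ω → β} (h : MI p X Y = 0) :
    ∀ a b, distOf p (fun ω => (X ω, Y ω)) (a, b) = distOf p X a * distOf p Y b := by
  classical
  set μ := fun a => distOf p X a with hμ
  set ν := fun b => distOf p Y b with hν
  set j := fun (c : α × β) => distOf p (fun ω => (X ω, Y ω)) c with hj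
  set m := fun (c : α × β) => μ c.1 * ν c.2 with hm
  have jnn : ∀ c, 0 ≤ j c := fun c => distOf_nonneg hp.1 _ _
  have μnn : ∀ a, 0 ≤ μ a := fun a => distOf_nonneg hp.1 _ _
  have νnn : ∀ b, 0 ≤ ν b := fun b => distOf_nonneg hp.1 _ _
  have mnn : ∀ c, 0 ≤ m c := fun c => mul_nonneg (μnn c.1) (νnn c.2)
  have sumμ : ∑ a, μ a = 1 := (sum_distOf X).trans hp.2
  have sumν : ∑ b, ν b = 1 := (sum_distOf Y).trans hp.2
  have margX : ∀ a, ∑ b, j (a, b) = μ a := fun a => distOf_pair_sum_right X Y a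
  have margY : ∀ b, ∑ a, j (a, b) = ν b := fun b => distOf_pair_sum_left X Y b
  have sumj : ∑ c, j c = 1 := by
    rw [Fintype.sum_prod_type, Finset.sum_congr rfl fun a _ => margX a]; exact sumμ
  have summ : ∑ c, m c = 1 := by
    rw [Fintype.sum_prod_type]
    have h1 : ∀ a : α, ∑ b, m (a, b) = μ a := by
      intro a
      show ∑ b, μ a * ν b = μ a
      rw [← Finset.mul_sum, sumν, mul_one]
    rw [Finset.sum_congr rfl fun a _ => h1 a]; exact sumμ
  have hsupp : ∀ c, j c ≠ 0 → 0 < m c := by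
    intro c hc
    have hjc : 0 < j c := lt_of_le_of_ne (jnn c) (Ne.symm hc)
    have h1 : j c ≤ μ c.1 := by
      rw [← margX c.1]
      exact Finset.single_le_sum (fun b _ => jnn (c.1, b)) (Finset.mem_univ c.2)
    have h2 : j c ≤ ν c.2 := by
      rw [← margY c.2]
      exact Finset.single_le_sum (fun a _ => jnn (a, c.2)) (Finset.mem_univ c.1)
    exact mul_pos (lt_of_lt_of_le hjc h1) (lt_of_lt_of_le hjc h2)
  have stepA : ∑ c, Real.negMulLog (m c) = H p X + H p Y := by
    rw [Fintype.sum_prod_type]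
    have e1 : ∀ a : α, ∑ b, Real.negMulLog (m (a, b))
        = (∑ b, ν b) * Real.negMulLog (μ a) + μ a * ∑ b, Real.negMulLog (ν b) := by
      intro a
      have e2 : ∀ b : β, Real.negMulLog (m (a, b))
          = ν b * Real.negMulLog (μ a) + μ a * Real.negMulLog (ν b) :=
        fun b => Real.negMulLog_mul (μ a) (ν b)
      rw [Finset.sum_congr rfl fun b _ => e2 b, Finset.sum_add_distrib,
        ← Finset.sum_mul, ← Finset.mul_sum]
    rw [Finset.sum_congr rfl fun a _ => e1 a, Finset.sum_add_distrib, sumν]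
    simp only [one_mul]
    rw [← Finset.sum_mul, sumμ, one_mul]
    rfl
  have hMIsum : ∑ c, Real.negMulLog (j c) = H p X + H p Y := by
    unfold MI at h
    have : H p (fun ω => (X ω, Y ω)) = ∑ c, Real.negMulLog (j c) := rfl
    linarith
  have hE : ∑ c, (Real.negMulLog (m c) - Real.negMulLog (j c)) = 0 := by
    rw [Finset.sum_sub_distrib, stepA, hMIsum]; ring
  have claim1 : ∀ c, Real.negMulLog (m c) - Real.negMulLog (j c)
      = j c * (Real.log (j c) - Real.log (m c)) + (j c - m c) * Real.log (m c) := by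
    intro c; simp only [Real.negMulLog]; ring
  have claim2 : ∑ c, (j c - m c) * Real.log (m c) = 0 := by
    have split1 : ∀ c, (j c - m c) * Real.log (m c)
        = (j c - m c) * Real.log (μ c.1) + (j c - m c) * Real.log (ν c.2) := by
      intro c
      by_cases h1 : μ c.1 = 0
      · have hj0 : j c = 0 := by
          by_contra hc
          have := hsupp c hc
          rw [hm] at this
          simp only [h1, zero_mul] at this
          exact lt_irrefl 0 this
        have hm0 : m c = 0 := by rw [hm]; simp [h1]
        simp [hj0, hm0, h1]
      · by_cases h2 : ν c.2 = 0
        · have hj0 : j c = 0 := by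
            by_contra hc
            have := hsupp c hc
            rw [hm] at this
            simp only [h2, mul_zero] at this
            exact lt_irrefl 0 this
          have hm0 : m c = 0 := by rw [hm]; simp [h2]
          simp [hj0, hm0, h2]
        · show (j c - m c) * Real.log (μ c.1 * ν c.2) = _
          rw [Real.log_mul h1 h2, mul_add]
    rw [Finset.sum_congr rfl fun c _ => split1 c, Finset.sum_add_distrib]
    have z1 : ∑ c : α × β, (j c - m c) * Real.log (μ c.1) = 0 := by
      rw [Fintype.sum_prod_type]
      apply Finset.sum_eq_zero
      intro a _
      dsimp only
      rw [← Finset.sum_mul]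
      have : ∑ b, (j (a, b) - m (a, b)) = 0 := by
        rw [Finset.sum_sub_distrib, margX]
        have : ∑ b, m (a, b) = μ a := by
          show ∑ b, μ a * ν b = μ a
          rw [← Finset.mul_sum, sumν, mul_one]
        rw [this]; ring
      rw [this, zero_mul]
    have z2 : ∑ c : α × β, (j c - m c) * Real.log (ν c.2) = 0 := by
      rw [Fintype.sum_prod_type, Finset.sum_comm]
      apply Finset.sum_eq_zero
      intro b _
      dsimp only
      rw [← Finset.sum_mul]
      have : ∑ a, (j (a, b) - m (a, b)) = 0 := by
        rw [Finset.sum_sub_distrib, margY]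
        have : ∑ a, m (a, b) = ν b := by
          show ∑ a, μ a * ν b = ν b
          rw [← Finset.sum_mul, sumμ, one_mul]
        rw [this]; ring
      rw [this, zero_mul]
    rw [z1, z2]; ring
  have hK : ∑ c, j c * (Real.log (j c) - Real.log (m c)) = 0 := by
    have := hE
    rw [Finset.sum_congr rfl fun c _ => claim1 c, Finset.sum_add_distrib, claim2] at this
    linarith
  have pointwise_le : ∀ c ∈ Finset.univ, j c - m c ≤ j c * (Real.log (j c) - Real.log (m c)) := by
    intro c _
    by_cases hj0 : j c = 0
    · simp [hj0]; linarith [mnn c]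
    · have hjp : 0 < j c := lt_of_le_of_ne (jnn c) (Ne.symm hj0)
      have hmp : 0 < m c := hsupp c hj0
      have hlog : Real.log (m c / j c) ≤ m c / j c - 1 :=
        Real.log_le_sub_one_of_pos (div_pos hmp hjp)
      have h2 : j c * Real.log (m c / j c) ≤ j c * (m c / j c - 1) :=
        mul_le_mul_of_nonneg_left hlog hjp.le
      have h3 : j c * (m c / j c - 1) = m c - j c := by
        field_simp
      have h4 : j c * Real.log (m c / j c) = j c * Real.log (m c) - j c * Real.log (j c) := by
        rw [Real.log_div (ne_of_gt hmp) hj0]; ring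
      rw [h3, h4] at h2
      nlinarith [h2]
  have hsums : ∑ c, (j c - m c) = ∑ c, j c * (Real.log (j c) - Real.log (m c)) := by
    rw [Finset.sum_sub_distrib, sumj, summ, hK]; ring
  have hpt := (Finset.sum_eq_sum_iff_of_le pointwise_le).mp hsums
  intro a b
  have hc := hpt (a, b) (Finset.mem_univ (a, b))
  show j (a, b) = m (a, b)
  set c : α × β := (a, b)
  by_cases hj0 : j c = 0
  · have : m c = 0 := by
      rw [hj0] at hc
      simp at hc
      linarith [hc]
    rw [hj0, this]
  · have hjp : 0 < j c := lt_of_le_of_ne (jnn c) (Ne.symm hj0)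
    have hmp : 0 < m c := hsupp c hj0
    by_contra hne
    have hne2 : m c / j c ≠ 1 := by
      intro hdiv
      exact hne ((div_eq_one_iff_eq (ne_of_gt hjp)).mp hdiv).symm
    have hlog : Real.log (m c / j c) < m c / j c - 1 :=
      Real.log_lt_sub_one_of_pos (div_pos hmp hjp) hne2
    have h2 : j c * Real.log (m c / j c) < j c * (m c / j c - 1) :=
      mul_lt_mul_of_pos_left hlog hjp
    have h3 : j c * (m c / j c - 1) = m c - j c := by field_simp
    have h4 : j c * Real.log (m c / j c) = j c * Real.log (m c) - j c * Real.log (j c) := by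
      rw [Real.log_div (ne_of_gt hmp) hj0]; ring
    rw [h3, h4] at h2
    nlinarith [h2, hc]



lemma core_diff {αS αQ αQ' γ₁ γ₂ : Type} [Fintype αS] [Fintype αQ] [Fintype αQ']
    [Fintype γ₁] [Fintype γ₂]
    (S : Ω → αS) (Q : Ω → αQ) (q : αQ → αQ') (G₁ : αQ' → αS → γ₁) (G₂ : αQ' → αS → γ₂)
    (hind : ∀ a b, distOf p (fun ω => (S ω, Q ω)) (a, b) = distOf p S a * distOf p Q b) :
    H p (fun ω => (G₁ (q (Q ω)) (S ω), Q ω)) - H p (fun ω => (G₂ (q (Q ω)) (S ω), Q ω))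
      = H p (fun ω => (G₁ (q (Q ω)) (S ω), q (Q ω)))
        - H p (fun ω => (G₂ (q (Q ω)) (S ω), q (Q ω))) := by
  classical
  have main : ∀ (γ : Type) (_ : Fintype γ), ∀ (G : αQ' → αS → γ),
      (H p (fun ω => (G (q (Q ω)) (S ω), Q ω))
        = ∑ z, distOf p Q z *
            (∑ x, Real.negMulLog (∑ a, if G (q z) a = x then distOf p S a else 0))
          + (∑ a, distOf p S a) * ∑ z, Real.negMulLog (distOf p Q z))
      ∧ (H p (fun ω => (G (q (Q ω)) (S ω), q (Q ω)))
        = ∑ c, (∑ z, if q z = c then distOf p Q z else 0) *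
            (∑ x, Real.negMulLog (∑ a, if G c a = x then distOf p S a else 0))
          + (∑ a, distOf p S a) *
            ∑ c, Real.negMulLog (∑ z, if q z = c then distOf p Q z else 0)) := by
    intro γ _ G
    have Tsum : ∀ c : αQ', (∑ x : γ, ∑ a, if G c a = x then distOf p S a else 0)
        = ∑ a, distOf p S a := by
      intro c
      rw [Finset.sum_comm]
      refine Finset.sum_congr rfl fun a _ => ?_
      simp [Finset.sum_ite_eq]
    constructor
    · have hdist : ∀ (x : γ) (z : αQ), distOf p (fun ω => (G (q (Q ω)) (S ω), Q ω)) (x, z)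
          = distOf p Q z * ∑ a, if G (q z) a = x then distOf p S a else 0 := by
        intro x z
        have e1 : distOf p (fun ω => (G (q (Q ω)) (S ω), Q ω)) (x, z)
            = ∑ d : αS × αQ, if (G (q d.2) d.1, d.2) = (x, z)
                then distOf p (fun ω => (S ω, Q ω)) d else 0 := by
          convert distOf_comp (p := p) (fun ω => (S ω, Q ω))
            (fun d => (G (q d.2) d.1, d.2)) (x, z) using 2
          all_goals congr!
        rw [e1, Finset.sum_congr rfl fun d _ => by
            rw [show distOf p (fun ω => (S ω, Q ω)) d = distOf p S d.1 * distOf p Q d.2 from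
              hind d.1 d.2],
          Fintype.sum_prod_type]
        have h2 : ∀ a : αS, (∑ b, if (G (q b) a, b) = (x, z)
              then distOf p S a * distOf p Q b else 0)
            = if G (q z) a = x then distOf p S a * distOf p Q z else 0 := by
          intro a
          have h3 : ∀ b, (if (G (q b) a, b) = (x, z) then distOf p S a * distOf p Q b else 0)
              = if b = z then (if G (q z) a = x then distOf p S a * distOf p Q z else 0)
                else 0 := by
            intro b
            rcases eq_or_ne b z with rfl | hne
            · simp [Prod.mk.injEq]
            · simp [Prod.mk.injEq, hne]
          rw [Finset.sum_congr rfl fun b _ => h3 b, Finset.sum_ite_eq']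
          simp
        rw [Finset.sum_congr rfl fun a _ => h2 a, Finset.mul_sum]
        refine Finset.sum_congr rfl fun a _ => ?_
        rw [mul_ite, mul_zero]
        split <;> ring
      unfold H
      rw [Fintype.sum_prod_type,
        Finset.sum_congr rfl fun x _ => Finset.sum_congr rfl fun z _ => by rw [hdist x z],
        Finset.sum_comm]
      have h4 : ∀ z, (∑ x : γ, Real.negMulLog (distOf p Q z *
              ∑ a, if G (q z) a = x then distOf p S a else 0))
          = distOf p Q z * (∑ x : γ, Real.negMulLog
              (∑ a, if G (q z) a = x then distOf p S a else 0))
            + (∑ a, distOf p S a) * Real.negMulLog (distOf p Q z) := by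
        intro z
        rw [Finset.sum_congr rfl fun x _ => Real.negMulLog_mul (distOf p Q z)
            (∑ a, if G (q z) a = x then distOf p S a else 0),
          Finset.sum_add_distrib, ← Finset.sum_mul, Tsum, ← Finset.mul_sum]
        ring
      rw [Finset.sum_congr rfl fun z _ => h4 z, Finset.sum_add_distrib, ← Finset.mul_sum]
    · have hdist' : ∀ (x : γ) (c : αQ'),
          distOf p (fun ω => (G (q (Q ω)) (S ω), q (Q ω))) (x, c)
          = (∑ z, if q z = c then distOf p Q z else 0) *
              ∑ a, if G c a = x then distOf p S a else 0 := by
        intro x c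
        have e1 : distOf p (fun ω => (G (q (Q ω)) (S ω), q (Q ω))) (x, c)
            = ∑ d : αS × αQ, if (G (q d.2) d.1, q d.2) = (x, c)
                then distOf p (fun ω => (S ω, Q ω)) d else 0 := by
          convert distOf_comp (p := p) (fun ω => (S ω, Q ω))
            (fun d => (G (q d.2) d.1, q d.2)) (x, c) using 2
          all_goals congr!
        rw [e1, Finset.sum_congr rfl fun d _ => by
            rw [show distOf p (fun ω => (S ω, Q ω)) d = distOf p S d.1 * distOf p Q d.2 from
              hind d.1 d.2],
          Fintype.sum_prod_type, Finset.sum_comm]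
        have h2 : ∀ b, (∑ a, if (G (q b) a, q b) = (x, c)
              then distOf p S a * distOf p Q b else 0)
            = (if q b = c then distOf p Q b else 0) *
                ∑ a, if G c a = x then distOf p S a else 0 := by
          intro b
          by_cases hb : q b = c
          · rw [if_pos hb, Finset.mul_sum]
            refine Finset.sum_congr rfl fun a _ => ?_
            rw [hb]
            have hiff : ((G c a, c) = (x, c)) ↔ (G c a = x) := by simp
            rw [if_congr hiff rfl rfl, mul_ite, mul_zero]
            split <;> ring
          · rw [if_neg hb, zero_mul]
            apply Finset.sum_eq_zero
            intro a _
            have hcon : (G (q b) a, q b) ≠ (x, c) := fun hcon => hb (congrArg Prod.snd hcon)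
            simp [hcon]
        rw [Finset.sum_congr rfl fun b _ => h2 b, ← Finset.sum_mul]
      unfold H
      rw [Fintype.sum_prod_type,
        Finset.sum_congr rfl fun x _ => Finset.sum_congr rfl fun c _ => by rw [hdist' x c],
        Finset.sum_comm]
      have h4 : ∀ c, (∑ x : γ, Real.negMulLog ((∑ z, if q z = c then distOf p Q z else 0) *
              ∑ a, if G c a = x then distOf p S a else 0))
          = (∑ z, if q z = c then distOf p Q z else 0) *
              (∑ x : γ, Real.negMulLog (∑ a, if G c a = x then distOf p S a else 0))
            + (∑ a, distOf p S a) *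
              Real.negMulLog (∑ z, if q z = c then distOf p Q z else 0) := by
        intro c
        rw [Finset.sum_congr rfl fun x _ => Real.negMulLog_mul
            (∑ z, if q z = c then distOf p Q z else 0)
            (∑ a, if G c a = x then distOf p S a else 0),
          Finset.sum_add_distrib, ← Finset.sum_mul, Tsum, ← Finset.mul_sum]
        ring
      rw [Finset.sum_congr rfl fun c _ => h4 c, Finset.sum_add_distrib, ← Finset.mul_sum]
  have fib : ∀ f : αQ' → ℝ,
      (∑ c, (∑ z, if q z = c then distOf p Q z else 0) * f c)
        = ∑ z, distOf p Q z * f (q z) := by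
    intro f
    rw [Finset.sum_congr rfl fun c _ =>
      Finset.sum_mul Finset.univ (fun z => if q z = c then distOf p Q z else 0) (f c),
      Finset.sum_comm]
    refine Finset.sum_congr rfl fun z _ => ?_
    have h5 : ∀ c, (if q z = c then distOf p Q z else 0) * f c
        = if q z = c then distOf p Q z * f (q z) else 0 := by
      intro c
      rcases eq_or_ne (q z) c with rfl | hne
      · simp
      · simp [hne]
    rw [Finset.sum_congr rfl fun c _ => h5 c, Finset.sum_ite_eq]
    simp
  obtain ⟨h11, h12⟩ := main γ₁ inferInstance G₁
  obtain ⟨h21, h22⟩ := main γ₂ inferInstance G₂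
  rw [h11, h12, h21, h22]
  have f1 := fib (fun c => ∑ x, Real.negMulLog (∑ a, if G₁ c a = x then distOf p S a else 0))
  have f2 := fib (fun c => ∑ x, Real.negMulLog (∑ a, if G₂ c a = x then distOf p S a else 0))
  try dsimp only at f1 f2
  linarith

end SDMM

/-- **Lemma 9 of MM-XSTPIR (conditioning on all queries equals conditioning on
the subset's queries).**  If `S'` is a function of `S`, `Q'` is a function of
`Q`, the answers `A` are a function of `(Q', S)`, the messages `W` are a
function of `S`, and `S` is independent of `Q`, then
`H(A | S', Q, W) = H(A | S', Q', W)`. -/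
theorem cond_entropy_answers_queries_subset
    (Ω : Type) [Fintype Ω] (p : Ω → ℝ) (hp : SDMM.IsPMF p)
    {αS αS' αQ αQ' αA αW : Type} [Fintype αS] [Fintype αS'] [Fintype αQ]
    [Fintype αQ'] [Fintype αA] [Fintype αW]
    (S : Ω → αS) (S' : Ω → αS') (Q : Ω → αQ) (Q' : Ω → αQ')
    (A : Ω → αA) (W : Ω → αW)
    (hS' : SDMM.Hc p S' S = 0)
    (hQ' : SDMM.Hc p Q' Q = 0)
    (hA : SDMM.Hc p A (fun ω => (Q' ω, S ω)) = 0)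
    (hW : SDMM.Hc p W S = 0)
    (hSQ : SDMM.MI p S Q = 0) :
    SDMM.Hc p A (fun ω => (S' ω, Q ω, W ω)) =
      SDMM.Hc p A (fun ω => (S' ω, Q' ω, W ω)) := by

  classical
  have hΩ : Nonempty Ω := by
    by_contra hno
    have hE : IsEmpty Ω := not_nonempty_iff.mp hno
    have h2 := hp.2
    rw [Finset.univ_eq_empty, Finset.sum_empty] at h2
    exact one_ne_zero h2.symm
  have hαS' : Nonempty αS' := ⟨S' (Classical.arbitrary Ω)⟩
  have hαQ' : Nonempty αQ' := ⟨Q' (Classical.arbitrary Ω)⟩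
  have hαA : Nonempty αA := ⟨A (Classical.arbitrary Ω)⟩
  have hαW : Nonempty αW := ⟨W (Classical.arbitrary Ω)⟩
  obtain ⟨s, hs⟩ := SDMM.exists_fn_of_Hc_eq_zero hp hS'
  obtain ⟨q, hq⟩ := SDMM.exists_fn_of_Hc_eq_zero hp hQ'
  obtain ⟨w, hw⟩ := SDMM.exists_fn_of_Hc_eq_zero hp hW
  obtain ⟨g, hg⟩ := SDMM.exists_fn_of_Hc_eq_zero hp hA
  have hind := SDMM.indep_of_MI_eq_zero hp hSQ
  have congr1 : SDMM.Hc p A (fun ω => (S' ω, Q ω, W ω))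
      = SDMM.Hc p (fun ω => g (q (Q ω), S ω)) (fun ω => (s (S ω), Q ω, w (S ω))) := by
    unfold SDMM.Hc
    have c1 : SDMM.H p (fun ω => (A ω, (S' ω, Q ω, W ω)))
        = SDMM.H p (fun ω => (g (q (Q ω), S ω), (s (S ω), Q ω, w (S ω)))) :=
      SDMM.H_congr (fun ω hω => by rw [hg ω hω, hq ω hω, hs ω hω, hw ω hω])
    have c2 : SDMM.H p (fun ω => (S' ω, Q ω, W ω))
        = SDMM.H p (fun ω => (s (S ω), Q ω, w (S ω))) :=
      SDMM.H_congr (fun ω hω => by rw [hs ω hω, hw ω hω])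
    rw [c1, c2]
  have congr2 : SDMM.Hc p A (fun ω => (S' ω, Q' ω, W ω))
      = SDMM.Hc p (fun ω => g (q (Q ω), S ω)) (fun ω => (s (S ω), q (Q ω), w (S ω))) := by
    unfold SDMM.Hc
    have c1 : SDMM.H p (fun ω => (A ω, (S' ω, Q' ω, W ω)))
        = SDMM.H p (fun ω => (g (q (Q ω), S ω), (s (S ω), q (Q ω), w (S ω)))) :=
      SDMM.H_congr (fun ω hω => by rw [hg ω hω, hq ω hω, hs ω hω, hw ω hω])
    have c2 : SDMM.H p (fun ω => (S' ω, Q' ω, W ω))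
        = SDMM.H p (fun ω => (s (S ω), q (Q ω), w (S ω))) :=
      SDMM.H_congr (fun ω hω => by rw [hq ω hω, hs ω hω, hw ω hω])
    rw [c1, c2]
  rw [congr1, congr2]
  unfold SDMM.Hc
  have i1 : SDMM.H p (fun ω => (g (q (Q ω), S ω), (s (S ω), Q ω, w (S ω))))
      = SDMM.H p (fun ω => ((g (q (Q ω), S ω), s (S ω), w (S ω)), Q ω)) :=
    (SDMM.H_comp_injective (p := p)
      (fun ω => ((g (q (Q ω), S ω), s (S ω), w (S ω)), Q ω))
      (e := fun d : (αA × αS' × αW) × αQ => (d.1.1, (d.1.2.1, d.2, d.1.2.2)))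
      (Function.LeftInverse.injective
        (g := fun y : αA × (αS' × αQ × αW) => ((y.1, (y.2.1, y.2.2.2)), y.2.2.1))
        (fun d => rfl)))
  have i2 : SDMM.H p (fun ω => (s (S ω), Q ω, w (S ω)))
      = SDMM.H p (fun ω => ((s (S ω), w (S ω)), Q ω)) :=
    (SDMM.H_comp_injective (p := p) (fun ω => ((s (S ω), w (S ω)), Q ω))
      (e := fun d : (αS' × αW) × αQ => (d.1.1, d.2, d.1.2))
      (Function.LeftInverse.injective
        (g := fun y : αS' × αQ × αW => ((y.1, y.2.2), y.2.1))
        (fun d => rfl)))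
  have i3 : SDMM.H p (fun ω => (g (q (Q ω), S ω), (s (S ω), q (Q ω), w (S ω))))
      = SDMM.H p (fun ω => ((g (q (Q ω), S ω), s (S ω), w (S ω)), q (Q ω))) :=
    (SDMM.H_comp_injective (p := p)
      (fun ω => ((g (q (Q ω), S ω), s (S ω), w (S ω)), q (Q ω)))
      (e := fun d : (αA × αS' × αW) × αQ' => (d.1.1, (d.1.2.1, d.2, d.1.2.2)))
      (Function.LeftInverse.injective
        (g := fun y : αA × (αS' × αQ' × αW) => ((y.1, (y.2.1, y.2.2.2)), y.2.2.1))
        (fun d => rfl)))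
  have i4 : SDMM.H p (fun ω => (s (S ω), q (Q ω), w (S ω)))
      = SDMM.H p (fun ω => ((s (S ω), w (S ω)), q (Q ω))) :=
    (SDMM.H_comp_injective (p := p) (fun ω => ((s (S ω), w (S ω)), q (Q ω)))
      (e := fun d : (αS' × αW) × αQ' => (d.1.1, d.2, d.1.2))
      (Function.LeftInverse.injective
        (g := fun y : αS' × αQ' × αW => ((y.1, y.2.2), y.2.1))
        (fun d => rfl)))
  rw [i1, i2, i3, i4]
  exact SDMM.core_diff S Q q (fun c a => (g (c, a), s a, w a)) (fun _ a => (s a, w a)) hind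
end
end
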